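/- arXiv:2204.02975 — 2 statements merged into one kernel-verified Lean document; each statement's English description precedes it below -/
import Mathlib

section
/- If an order isomorphism U intertwines the semigroups T¹_t and T²_t, then T¹_t is irreducible if and only if T²_t is irreducible. -/
open MeasureTheory
open scoped NNReal

/-- A set `A` is `T_t`-invariant if `1_A · T_t f = T_t (1_A f)` for all `f ∈ L²` and
all `t ≥ 0`. -/
def IsInvariantSet {E : Type*} [MeasurableSpace E] (m : Measure E)
    (T : ℝ≥0 → (Lp ℝ 2 m →L[ℝ] Lp ℝ 2 m)) (A : Set E) : Prop :=
  ∀ t : ℝ≥0, ∀ f g : Lp ℝ 2 m, (g : E → ℝ) =ᵐ[m] A.indicator f →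
    (T t g : E → ℝ) =ᵐ[m] A.indicator (T t f)

/-- A semigroup `(T_t)` is irreducible if every `T_t`-invariant set `A` satisfies
`m(A) = 0` or `m(Aᶜ) = 0`. -/
def IsIrreducibleSemigroup {E : Type*} [MeasurableSpace E] (m : Measure E)
    (T : ℝ≥0 → (Lp ℝ 2 m →L[ℝ] Lp ℝ 2 m)) : Prop :=
  ∀ A : Set E, MeasurableSet A → IsInvariantSet m T A → m A = 0 ∨ m Aᶜ = 0

/-!
An order isomorphism between lattice-ordered groups preserves `⊔`, `⊓` and `|·|`, hence
disjointness `|f| ⊓ |g| = 0`. Multiplication by `1_A` on `L²` is the first half of a splitting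
`f = P f + Q f` in which every `P g` is disjoint from every `Q h`; conversely, every such
splitting is multiplication by the indicator of the support of `P g₀`, for any a.e. nonzero `g₀`.
Conjugating `1_A` by `U` therefore gives multiplication by some `1_{A'}`, and `A'` is
`T²`-invariant when `A` is `T¹`-invariant because `U` intertwines the semigroups. Testing on an
a.e. positive `f₀ ∈ L²(m₁)` shows that `m₂ A' = 0` forces `m₁ A = 0`, and likewise for the
complements.
-/

open scoped ENNReal

section OrderIso

variable {α β : Type*} [AddCommGroup α] [Lattice α] [IsOrderedAddMonoid α]
  [AddCommGroup β] [Lattice β] [IsOrderedAddMonoid β]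

def AddEquiv.toOrderIsoOfNonnegIff (U : α ≃+ β) (hU : ∀ f, 0 ≤ f ↔ 0 ≤ U f) : α ≃o β where
  toEquiv := U.toEquiv
  map_rel_iff' {f g} := by
    change U f ≤ U g ↔ f ≤ g
    rw [← sub_nonneg, ← map_sub, ← hU, sub_nonneg]

theorem AddEquiv.abs_inf_abs_eq_zero_of_nonneg_iff (U : α ≃+ β) (hU : ∀ f, 0 ≤ f ↔ 0 ≤ U f)
    {f g : α} (h : |f| ⊓ |g| = 0) : |U f| ⊓ |U g| = 0 := by
  have map_inf : ∀ f g, U (f ⊓ g) = U f ⊓ U g := (U.toOrderIsoOfNonnegIff hU).map_inf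
  have map_sup : ∀ f g, U (f ⊔ g) = U f ⊔ U g := (U.toOrderIsoOfNonnegIff hU).map_sup
  have map_abs : ∀ f, U |f| = |U f| := fun f => by rw [abs, abs, map_sup, map_neg]
  rw [← map_abs, ← map_abs, ← map_inf, h, map_zero]

end OrderIso

namespace MeasureTheory.Lp

variable {E F : Type*} [MeasurableSpace E] {m : Measure E} {p : ℝ≥0∞}

section Indicator

variable [NormedAddCommGroup F] {A : Set E}

noncomputable def indicator (hA : MeasurableSet A) (f : Lp F p m) : Lp F p m :=
  ((Lp.memLp f).indicator hA).toLp (A.indicator f)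

theorem coeFn_indicator (hA : MeasurableSet A) (f : Lp F p m) :
    ⇑(indicator hA f) =ᵐ[m] A.indicator f :=
  MemLp.coeFn_toLp _

theorem indicator_add_indicator_compl (hA : MeasurableSet A) (f : Lp F p m) :
    indicator hA f + indicator hA.compl f = f := by
  refine Lp.ext ?_
  filter_upwards [Lp.coeFn_add (indicator hA f) (indicator hA.compl f), coeFn_indicator hA f,
    coeFn_indicator hA.compl f] with x hsum hA hAc
  rw [hsum, Pi.add_apply, hA, hAc, Set.indicator_self_add_compl_apply]

theorem indicator_eq_zero_of_measure_eq_zero (hA : MeasurableSet A) (hA0 : m A = 0)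
    (f : Lp F p m) : indicator hA f = 0 := by
  refine Lp.ext ?_
  filter_upwards [coeFn_indicator hA f, Lp.coeFn_zero F p m,
    measure_eq_zero_iff_ae_notMem.1 hA0] with x hf h0 hx
  rw [hf, h0, Set.indicator_of_notMem hx, Pi.zero_apply]

theorem measure_eq_zero_of_indicator_eq_zero (hA : MeasurableSet A) {f : Lp F p m}
    (hf : ∀ᵐ x ∂m, f x ≠ 0) (h : indicator hA f = 0) : m A = 0 := by
  have hind : A.indicator f =ᵐ[m] 0 := by
    refine (coeFn_indicator hA f).symm.trans ?_
    rw [h]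
    exact Lp.coeFn_zero F p m
  rw [measure_eq_zero_iff_ae_notMem]
  filter_upwards [hind, hf] with x hx hfx hxA
  rw [Set.indicator_of_mem hxA] at hx
  exact hfx hx

end Indicator

theorem abs_inf_abs_eq_zero_iff {u v : Lp ℝ p m} :
    |u| ⊓ |v| = 0 ↔ ∀ᵐ x ∂m, u x = 0 ∨ v x = 0 := by
  have hcoe : ⇑(|u| ⊓ |v|) =ᵐ[m] fun x => |u x| ⊓ |v x| := by
    filter_upwards [Lp.coeFn_inf |u| |v|, Lp.coeFn_abs u, Lp.coeFn_abs v] with x h hu hv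
    rw [h, Pi.inf_apply, hu, hv]
  have hpt : ∀ a b : ℝ, |a| ⊓ |b| = 0 ↔ a = 0 ∨ b = 0 := fun a b => by
    grind [abs_eq_zero, abs_nonneg]
  have hzero : |u| ⊓ |v| = 0 ↔ (fun x => |u x| ⊓ |v x|) =ᵐ[m] 0 := by
    rw [Lp.eq_zero_iff_ae_eq_zero]
    exact ⟨hcoe.symm.trans, hcoe.trans⟩
  simp only [hzero, Filter.EventuallyEq, Pi.zero_apply, hpt]

theorem abs_inf_abs_indicator_compl_eq_zero {A : Set E} (hA : MeasurableSet A)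
    (f g : Lp ℝ p m) : |indicator hA f| ⊓ |indicator hA.compl g| = 0 := by
  refine abs_inf_abs_eq_zero_iff.2 ?_
  filter_upwards [coeFn_indicator hA f, coeFn_indicator hA.compl g] with x hf hg
  rw [hf, hg]
  by_cases hx : x ∈ A
  · exact .inr (Set.indicator_of_notMem (Set.notMem_compl_iff.2 hx) _)
  · exact .inl (Set.indicator_of_notMem hx _)

theorem exists_indicator_eq_of_add_eq_of_abs_inf_abs_eq_zero {P Q : Lp ℝ p m → Lp ℝ p m}
    (hPQ : ∀ g, P g + Q g = g) (hdisj : ∀ g h, |P g| ⊓ |Q h| = 0)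
    {g₀ : Lp ℝ p m} (hg₀ : ∀ᵐ x ∂m, g₀ x ≠ 0) :
    ∃ A, ∃ hA : MeasurableSet A, ∀ g, P g = indicator hA g := by
  have hA : MeasurableSet {x | P g₀ x ≠ 0} :=
    ((Lp.stronglyMeasurable (P g₀)).measurable (measurableSet_singleton 0)).compl
  refine ⟨_, hA, fun g => Lp.ext ?_⟩
  have hsum : ∀ g : Lp ℝ p m, ∀ᵐ x ∂m, g x = P g x + Q g x := fun g => by
    simpa only [hPQ, Filter.EventuallyEq, Pi.add_apply] using Lp.coeFn_add (P g) (Q g)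
  filter_upwards [coeFn_indicator hA g, hsum g, hsum g₀, abs_inf_abs_eq_zero_iff.1 (hdisj g g₀),
    abs_inf_abs_eq_zero_iff.1 (hdisj g₀ g), hg₀] with x hind hg hg₀' h1 h2 hg₀x
  rw [hind]
  -- Off the support of `P g₀`, `Q g₀ x = g₀ x ≠ 0` forces `P g x = 0`;
  -- on it, `P g₀ x ≠ 0` forces `Q g x = 0`.
  by_cases hx : P g₀ x = 0
  · rw [Set.indicator_of_notMem (by simpa using hx)]
    refine h1.resolve_right fun hQ => hg₀x ?_
    rw [hg₀', hx, hQ, add_zero]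
  · rw [Set.indicator_of_mem hx, hg, h2.resolve_left hx, add_zero]

end MeasureTheory.Lp

theorem MeasureTheory.exists_Lp_two_ae_pos {E : Type*} [MeasurableSpace E] (m : Measure E)
    [SigmaFinite m] : ∃ f : Lp ℝ 2 m, ∀ᵐ x ∂m, 0 < f x := by
  obtain ⟨g, hg_pos, hg_meas, hg_int⟩ := exists_pos_lintegral_lt_of_sigmaFinite m one_ne_zero
  have hg_int' : Integrable (fun x => (g x : ℝ)) m := by
    simpa using integrable_toReal_of_lintegral_ne_top hg_meas.coe_nnreal_ennreal.aemeasurable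
      (hg_int.trans ENNReal.one_lt_top).ne
  have hsqrt_meas : Measurable fun x => √(g x : ℝ) := hg_meas.coe_nnreal_real.sqrt
  have hmem : MemLp (fun x => √(g x : ℝ)) 2 m := by
    refine (memLp_two_iff_integrable_sq hsqrt_meas.aestronglyMeasurable).2 ?_
    simpa only [Real.sq_sqrt (NNReal.coe_nonneg _)] using hg_int'
  refine ⟨hmem.toLp _, ?_⟩
  filter_upwards [hmem.coeFn_toLp] with x hx
  rw [hx]
  exact Real.sqrt_pos.2 (hg_pos x)

theorem isInvariantSet_iff_commute_indicator {E : Type*} [MeasurableSpace E] {m : Measure E}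
    {T : ℝ≥0 → (Lp ℝ 2 m →L[ℝ] Lp ℝ 2 m)} {A : Set E} (hA : MeasurableSet A) :
    IsInvariantSet m T A ↔ ∀ t f, T t (Lp.indicator hA f) = Lp.indicator hA (T t f) := by
  refine ⟨fun h t f => Lp.ext ?_, fun h t f g hg => ?_⟩
  · exact (h t f _ (Lp.coeFn_indicator hA f)).trans (Lp.coeFn_indicator hA _).symm
  · rw [show g = Lp.indicator hA f from Lp.ext (hg.trans (Lp.coeFn_indicator hA f).symm), h]
    exact Lp.coeFn_indicator hA _

section Transfer

variable {E₁ E₂ : Type*} [MeasurableSpace E₁] [MeasurableSpace E₂]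
  {m₁ : Measure E₁} {m₂ : Measure E₂} {A : Set E₁} {A' : Set E₂}

theorem AddEquiv.exists_map_indicator_eq_indicator [SigmaFinite m₂]
    (U : Lp ℝ 2 m₁ ≃+ Lp ℝ 2 m₂) (hU : ∀ f, 0 ≤ f ↔ 0 ≤ U f) (hA : MeasurableSet A) :
    ∃ A', ∃ hA' : MeasurableSet A', ∀ f, U (Lp.indicator hA f) = Lp.indicator hA' (U f) := by
  obtain ⟨g₀, hg₀⟩ := exists_Lp_two_ae_pos m₂
  obtain ⟨A', hA', hP⟩ := Lp.exists_indicator_eq_of_add_eq_of_abs_inf_abs_eq_zero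
    (P := fun g => U (Lp.indicator hA (U.symm g)))
    (Q := fun g => U (Lp.indicator hA.compl (U.symm g)))
    (fun g => by simp only [← map_add, Lp.indicator_add_indicator_compl, U.apply_symm_apply])
    (fun g h => U.abs_inf_abs_eq_zero_of_nonneg_iff hU
      (Lp.abs_inf_abs_indicator_compl_eq_zero hA _ _))
    (hg₀.mono fun _ hx => hx.ne')
  exact ⟨A', hA', fun f => by simpa using hP (U f)⟩

variable {F : Type*} [NormedAddCommGroup F] {p : ℝ≥0∞}

theorem map_indicator_compl_eq_indicator_compl (U : Lp F p m₁ ≃+ Lp F p m₂)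
    {hA : MeasurableSet A} {hA' : MeasurableSet A'}
    (hUA : ∀ f, U (Lp.indicator hA f) = Lp.indicator hA' (U f)) (f : Lp F p m₁) :
    U (Lp.indicator hA.compl f) = Lp.indicator hA'.compl (U f) := by
  have h := congrArg U (Lp.indicator_add_indicator_compl hA f)
  rw [map_add, hUA] at h
  exact add_left_cancel (h.trans (Lp.indicator_add_indicator_compl hA' (U f)).symm)

theorem measure_eq_zero_of_map_indicator_eq_indicator [SigmaFinite m₁]
    (U : Lp ℝ 2 m₁ ≃+ Lp ℝ 2 m₂) {hA : MeasurableSet A} {hA' : MeasurableSet A'}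
    (hUA : ∀ f, U (Lp.indicator hA f) = Lp.indicator hA' (U f)) (h : m₂ A' = 0) : m₁ A = 0 := by
  obtain ⟨f₀, hf₀⟩ := exists_Lp_two_ae_pos m₁
  refine Lp.measure_eq_zero_of_indicator_eq_zero hA (hf₀.mono fun _ hx => hx.ne') (U.injective ?_)
  rw [hUA, Lp.indicator_eq_zero_of_measure_eq_zero hA' h, map_zero]

variable {T₁ : ℝ≥0 → (Lp ℝ 2 m₁ →L[ℝ] Lp ℝ 2 m₁)} {T₂ : ℝ≥0 → (Lp ℝ 2 m₂ →L[ℝ] Lp ℝ 2 m₂)}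

theorem IsInvariantSet.of_map_indicator_eq_indicator (U : Lp ℝ 2 m₁ ≃+ Lp ℝ 2 m₂)
    (hT : ∀ t f, U (T₁ t f) = T₂ t (U f)) {hA : MeasurableSet A} {hA' : MeasurableSet A'}
    (hUA : ∀ f, U (Lp.indicator hA f) = Lp.indicator hA' (U f)) (hinv : IsInvariantSet m₁ T₁ A) :
    IsInvariantSet m₂ T₂ A' := by
  rw [isInvariantSet_iff_commute_indicator hA] at hinv
  rw [isInvariantSet_iff_commute_indicator hA']
  intro t g
  obtain ⟨f, rfl⟩ := U.surjective g
  rw [← hUA, ← hT, ← hT, ← hUA, hinv]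

theorem IsIrreducibleSemigroup.of_intertwining [SigmaFinite m₁] [SigmaFinite m₂]
    (U : Lp ℝ 2 m₁ ≃+ Lp ℝ 2 m₂) (hU : ∀ f, 0 ≤ f ↔ 0 ≤ U f)
    (hT : ∀ t f, U (T₁ t f) = T₂ t (U f)) (h₂ : IsIrreducibleSemigroup m₂ T₂) :
    IsIrreducibleSemigroup m₁ T₁ := by
  intro A hA hinv
  obtain ⟨A', hA', hUA⟩ := U.exists_map_indicator_eq_indicator hU hA
  rcases h₂ A' hA' (hinv.of_map_indicator_eq_indicator U hT hUA) with h | h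
  · exact .inl (measure_eq_zero_of_map_indicator_eq_indicator U hUA h)
  · exact .inr (measure_eq_zero_of_map_indicator_eq_indicator U
      (map_indicator_compl_eq_indicator_compl U hUA) h)

end Transfer

theorem stmt_10_general {E₁ E₂ : Type*} [MeasurableSpace E₁]
    [MeasurableSpace E₂]
    (m₁ : Measure E₁) (m₂ : Measure E₂) [SigmaFinite m₁] [SigmaFinite m₂]
    (T₁ : ℝ≥0 → (Lp ℝ 2 m₁ →L[ℝ] Lp ℝ 2 m₁))
    (T₂ : ℝ≥0 → (Lp ℝ 2 m₂ →L[ℝ] Lp ℝ 2 m₂))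
    (U : Lp ℝ 2 m₁ ≃ₗ[ℝ] Lp ℝ 2 m₂)
    (hU : ∀ f : Lp ℝ 2 m₁, 0 ≤ f ↔ 0 ≤ U f)
    (hintertwine : ∀ t, ∀ f : Lp ℝ 2 m₁, U (T₁ t f) = T₂ t (U f)) :
    IsIrreducibleSemigroup m₁ T₁ ↔ IsIrreducibleSemigroup m₂ T₂ := by
  have hU_symm : ∀ g, 0 ≤ g ↔ 0 ≤ U.symm g := fun g => by simpa using (hU (U.symm g)).symm
  have hintertwine_symm : ∀ t g, U.symm (T₂ t g) = T₁ t (U.symm g) := fun t g =>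
    U.symm_apply_eq.2 (by rw [hintertwine, U.apply_symm_apply])
  exact ⟨fun h₁ => h₁.of_intertwining U.symm.toAddEquiv hU_symm hintertwine_symm,
    fun h₂ => h₂.of_intertwining U.toAddEquiv hU hintertwine⟩

/-- If an order isomorphism `U` intertwines the semigroups `T¹_t` and `T²_t`, then
`T¹_t` is irreducible if and only if `T²_t` is irreducible. -/
theorem stmt_10 {E₁ E₂ : Type*} [MeasurableSpace E₁] [StandardBorelSpace E₁]
    [MeasurableSpace E₂] [StandardBorelSpace E₂]
    (m₁ : Measure E₁) (m₂ : Measure E₂) [SigmaFinite m₁] [SigmaFinite m₂]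
    (T₁ : ℝ≥0 → (Lp ℝ 2 m₁ →L[ℝ] Lp ℝ 2 m₁))
    (T₂ : ℝ≥0 → (Lp ℝ 2 m₂ →L[ℝ] Lp ℝ 2 m₂))
    (U : Lp ℝ 2 m₁ ≃ₗ[ℝ] Lp ℝ 2 m₂)
    (hU : ∀ f : Lp ℝ 2 m₁, 0 ≤ f ↔ 0 ≤ U f)
    (hintertwine : ∀ t, ∀ f : Lp ℝ 2 m₁, U (T₁ t f) = T₂ t (U f)) :
    IsIrreducibleSemigroup m₁ T₁ ↔ IsIrreducibleSemigroup m₂ T₂ :=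
  stmt_10_general m₁ m₂ T₁ T₂ U hU hintertwine
end

section
/- If a bounded symmetric positivity preserving operator T on L²(E,m) with an irreducible semigroup satisfies φ·Tf = T(φ·f) for all f ∈ L²(E,m), where φ is a bounded measurable positive function, and (T_t) is irreducible, then φ is constant m-a.e. -/
open MeasureTheory
open scoped NNReal

/-!
If `T` is positive and commutes with multiplication by a bounded `ψ`, then `ψ·g ≥ 0` implies
`ψ·Tg ≥ 0`. Applied to `|g|` with `ψ = φ - r` and `ψ = r - φ`, this shows that `T` preserves
functions vanishing on `{φ < r}`, resp. on `{φ > r}`. When the level set `{φ = r}` is null,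
these two facts say that `{φ > r}` is invariant, so by irreducibility it is null or conull.
Only countably many levels of `φ` have positive measure, so the remaining `r` are dense, and
a function all of whose superlevel sets `{φ > r}`, `r` in a dense set, are trivial is a.e.
constant.
-/

open Filter Set
open scoped ENNReal

section CountableSeparating

variable {α : Type*} [LinearOrder α] [TopologicalSpace α] [OrderTopology α] [DenselyOrdered α]
  [SecondCountableTopology α]

theorem Dense.hasCountableSeparatingOn_Ioi {G : Set α} (hG : Dense G) :
    HasCountableSeparatingOn α (fun U => ∃ r ∈ G, U = Ioi r) univ := by
  obtain ⟨D, hDG, hDc, hD⟩ := hG.exists_countable_dense_subset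
  have hsep {a b : α} (hab : a < b) : ¬ ∀ s ∈ Ioi '' D, a ∈ s ↔ b ∈ s := fun hsame => by
    obtain ⟨r, hrD, har, hrb⟩ := hD.exists_between hab
    exact not_lt.2 har.le ((hsame _ ⟨r, hrD, rfl⟩).2 hrb)
  refine ⟨⟨Ioi '' D, hDc.image _, ?_, fun x _ y _ hxy => ?_⟩⟩
  · rintro _ ⟨r, hr, rfl⟩
    exact ⟨r, hDG hr, rfl⟩
  · by_contra hne
    rcases lt_or_gt_of_ne hne with hlt | hlt
    · exact hsep hlt hxy
    · exact hsep hlt fun s hs => (hxy s hs).symm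

end CountableSeparating

theorem exists_ae_eq_const_of_null_or_conull_superlevel {E : Type*} [MeasurableSpace E]
    {m : Measure E} [SFinite m] {φ : E → ℝ} (hφ : Measurable φ)
    (h : ∀ r, m {x | φ x = r} = 0 → m {x | r < φ x} = 0 ∨ m {x | r < φ x}ᶜ = 0) :
    ∃ a, ∀ᵐ x ∂m, φ x = a := by
  set G := {r : ℝ | m {x | φ x = r} = 0}
  have hG : Dense G := by
    refine ((Measure.countable_meas_level_set_pos (μ := m) hφ).dense_compl ℝ).mono
      fun r hr => ?_
    simpa [G, pos_iff_ne_zero] using hr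
  have := hG.hasCountableSeparatingOn_Ioi
  refine exists_eventuallyEq_const_of_forall_separating (fun U => ∃ r ∈ G, U = Ioi r) ?_
  rintro _ ⟨r, hr, rfl⟩
  rcases h r hr with hnull | hconull
  · exact Or.inr (measure_eq_zero_iff_ae_notMem.1 hnull)
  · exact Or.inl (mem_ae_iff.2 hconull)

section MultiplicationOperator

variable {E : Type*} [MeasurableSpace E] {m : Measure E} {p : ℝ≥0∞} [Fact (1 ≤ p)]
  {T : Lp ℝ p m →L[ℝ] Lp ℝ p m} {ψ : E → ℝ}

def CommutesWithMul (T : Lp ℝ p m →L[ℝ] Lp ℝ p m) (ψ : E → ℝ) : Prop :=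
  ∀ f g : Lp ℝ p m, (g : E → ℝ) =ᵐ[m] (fun x => ψ x * f x) →
    (T g : E → ℝ) =ᵐ[m] fun x => ψ x * T f x

theorem CommutesWithMul.neg (h : CommutesWithMul T ψ) : CommutesWithMul T (fun x => -ψ x) := by
  intro f g hg
  have hTg := h f (-g) (by
    filter_upwards [Lp.coeFn_neg g, hg] with x hnegx hgx
    rw [hnegx, Pi.neg_apply, hgx]
    ring)
  rw [map_neg] at hTg
  filter_upwards [hTg, Lp.coeFn_neg (T g)] with x hx hnegx
  rw [hnegx, Pi.neg_apply] at hx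
  linarith

theorem CommutesWithMul.add_const (h : CommutesWithMul T ψ) (b : ℝ) :
    CommutesWithMul T (fun x => ψ x + b) := by
  intro f g hg
  have hTg := h f (g - b • f) (by
    filter_upwards [Lp.coeFn_sub g (b • f), Lp.coeFn_smul b f, hg] with x hsubx hsmulx hgx
    simp only [hsubx, Pi.sub_apply, hsmulx, Pi.smul_apply, smul_eq_mul, hgx]
    ring)
  rw [map_sub, map_smul] at hTg
  filter_upwards [hTg, Lp.coeFn_sub (T g) (b • T f), Lp.coeFn_smul b (T f)]
    with x hx hsubx hsmulx
  rw [hsubx, Pi.sub_apply, hsmulx, Pi.smul_apply, smul_eq_mul] at hx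
  linarith

theorem CommutesWithMul.ae_nonneg_mul_apply (hT : ∀ f : Lp ℝ p m, 0 ≤ f → 0 ≤ T f)
    (h : CommutesWithMul T ψ) (hψ : MemLp ψ ∞ m) {f : Lp ℝ p m}
    (hf : 0 ≤ᵐ[m] fun x => ψ x * f x) : 0 ≤ᵐ[m] fun x => ψ x * T f x := by
  have hψf : MemLp (fun x => ψ x * f x) p m := (Lp.memLp f).mul' hψ
  have hg := hψf.coeFn_toLp
  have hTg := hT _ ((Lp.coeFn_nonneg _).1 (hf.trans_eq hg.symm))
  filter_upwards [(Lp.coeFn_nonneg _).2 hTg, h f _ hg] with x hx hTgx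
  rwa [← hTgx]

theorem CommutesWithMul.ae_apply_eq_zero_of_neg (hT : ∀ f : Lp ℝ p m, 0 ≤ f → 0 ≤ T f)
    (h : CommutesWithMul T ψ) (hψ : MemLp ψ ∞ m) {g : Lp ℝ p m}
    (hg : ∀ᵐ x ∂m, ψ x < 0 → g x = 0) : ∀ᵐ x ∂m, ψ x < 0 → T g x = 0 := by
  have hmono : Monotone T := fun a b hab => by
    simpa [map_sub] using hT _ (sub_nonneg.2 hab)
  have habs : |T g| ≤ T |g| :=
    abs_le'.2 ⟨hmono (le_abs_self g), by simpa using hmono (neg_le_abs g)⟩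
  have hψabs : 0 ≤ᵐ[m] fun x => ψ x * |g| x := by
    filter_upwards [Lp.coeFn_abs g, hg] with x habsx hgx
    rw [habsx]
    rcases lt_or_ge (ψ x) 0 with hneg | hnonneg
    · simp [hgx hneg]
    · exact mul_nonneg hnonneg (abs_nonneg _)
  filter_upwards [h.ae_nonneg_mul_apply hT hψ hψabs, (Lp.coeFn_nonneg _).2 (hT _ (abs_nonneg g)),
    (Lp.coeFn_le _ _).2 habs, Lp.coeFn_abs (T g)] with x hmul hnonneg hle habsx hneg
  have hzero : T |g| x = 0 := le_antisymm (nonpos_of_mul_nonneg_right hmul hneg) hnonneg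
  rw [habsx, hzero] at hle
  exact abs_nonpos_iff.1 hle

theorem CommutesWithMul.apply_indicator_ae_eq (hT : ∀ f : Lp ℝ p m, 0 ≤ f → 0 ≤ T f)
    {φ : E → ℝ} (h : CommutesWithMul T φ) (hφ : MemLp φ ∞ m) {r : ℝ}
    (hr : m {x | φ x = r} = 0) {f g : Lp ℝ p m}
    (hg : (g : E → ℝ) =ᵐ[m] {x | r < φ x}.indicator f) :
    (T g : E → ℝ) =ᵐ[m] {x | r < φ x}.indicator (T f) := by
  have hbelow : ∀ᵐ x ∂m, φ x + -r < 0 → T g x = 0 :=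
    (h.add_const (-r)).ae_apply_eq_zero_of_neg hT (hφ.add (memLp_top_const _)) (by
      filter_upwards [hg] with x hgx hx
      exact hgx.trans (indicator_of_notMem (s := {x | r < φ x}) (show ¬ r < φ x by linarith) _))
  have habove : ∀ᵐ x ∂m, -φ x + r < 0 → T (f - g) x = 0 :=
    (h.neg.add_const r).ae_apply_eq_zero_of_neg hT (hφ.neg.add (memLp_top_const _)) (by
      filter_upwards [Lp.coeFn_sub f g, hg] with x hsub hgx hx
      rw [hsub, Pi.sub_apply, hgx,
        indicator_of_mem (s := {x | r < φ x}) (show r < φ x by linarith), sub_self])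
  rw [map_sub] at habove
  filter_upwards [hbelow, habove, measure_eq_zero_iff_ae_notMem.1 hr,
    Lp.coeFn_sub (T f) (T g)] with x hb ha hne hsub
  rcases lt_or_gt_of_ne hne with hlt | hgt
  · rw [indicator_of_notMem (s := {x | r < φ x}) hlt.not_gt, hb (by linarith)]
  · rw [indicator_of_mem (s := {x | r < φ x}) hgt]
    rw [hsub, Pi.sub_apply] at ha
    linarith [ha (by linarith)]

end MultiplicationOperator

theorem stmt_18_general {E : Type*} [MeasurableSpace E] (m : Measure E) [SigmaFinite m]
    (T : ℝ≥0 → (Lp ℝ 2 m →L[ℝ] Lp ℝ 2 m))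
    (hTpos : ∀ t, ∀ f : Lp ℝ 2 m, 0 ≤ f → 0 ≤ T t f)
    (hTirr : IsIrreducibleSemigroup m T)
    (φ : E → ℝ) (hφmeas : Measurable φ)
    (c : ℝ) (hφbd : ∀ x, c⁻¹ ≤ φ x ∧ φ x ≤ c)
    (hcomm : ∀ t : ℝ≥0, ∀ f g : Lp ℝ 2 m, (g : E → ℝ) =ᵐ[m] (fun x => φ x * f x) →
      (T t g : E → ℝ) =ᵐ[m] fun x => φ x * (T t f) x) :
    ∃ a : ℝ, ∀ᵐ x ∂m, φ x = a := by
  have hφ : MemLp φ ∞ m := memLp_top_of_bound hφmeas.aestronglyMeasurable (|c⁻¹| + |c|)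
    (ae_of_all _ fun x => abs_le.2
      ⟨by linarith [neg_abs_le c⁻¹, abs_nonneg c, (hφbd x).1],
        by linarith [le_abs_self c, abs_nonneg c⁻¹, (hφbd x).2]⟩)
  refine exists_ae_eq_const_of_null_or_conull_superlevel hφmeas fun r hr =>
    hTirr _ (measurableSet_lt measurable_const hφmeas) fun t f g hg => ?_
  exact CommutesWithMul.apply_indicator_ae_eq (hTpos t) (hcomm t) hφ hr hg

/-- If a strongly continuous symmetric positivity preserving irreducible semigroup
`(T_t)` on `L²(E,m)` commutes with multiplication by a bounded measurable positive
function `φ` (with bounded inverse), i.e. `φ·T_t f = T_t(φ·f)` for all `t, f`,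
then `φ` is constant `m`-a.e. -/
theorem stmt_18 {E : Type*} [MeasurableSpace E] (m : Measure E) [SigmaFinite m]
    (T : ℝ≥0 → (Lp ℝ 2 m →L[ℝ] Lp ℝ 2 m))
    (hT0 : T 0 = ContinuousLinearMap.id ℝ _)
    (hTsg : ∀ s t : ℝ≥0, T (s + t) = (T s).comp (T t))
    (hTsymm : ∀ t, ∀ f g : Lp ℝ 2 m, ∫ x, (T t f) x * g x ∂m = ∫ x, f x * (T t g) x ∂m)
    (hTpos : ∀ t, ∀ f : Lp ℝ 2 m, 0 ≤ f → 0 ≤ T t f)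
    (hTcont : ∀ f : Lp ℝ 2 m, Continuous fun t : ℝ≥0 => T t f)
    (hTirr : IsIrreducibleSemigroup m T)
    (φ : E → ℝ) (hφmeas : Measurable φ)
    (c : ℝ) (hc : 0 < c) (hφbd : ∀ x, c⁻¹ ≤ φ x ∧ φ x ≤ c)
    (hcomm : ∀ t : ℝ≥0, ∀ f g : Lp ℝ 2 m, (g : E → ℝ) =ᵐ[m] (fun x => φ x * f x) →
      (T t g : E → ℝ) =ᵐ[m] fun x => φ x * (T t f) x) :
    ∃ a : ℝ, ∀ᵐ x ∂m, φ x = a :=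
  stmt_18_general m T hTpos hTirr φ hφmeas c hφbd hcomm
end
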